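/- Let n = 2m + 1 be an odd positive integer (m ≥ 0). Then, in the polynomial ring ℝ[t], ∏_{d | n} ψ_d(2t) = 2·(T_{m+1}(t) − T_m(t)), where the product is over the positive divisors d of n, ψ_d(2t) denotes the composition of ψ_d with the polynomial 2t, and T_k denotes the k-th Chebyshev polynomial of the first kind. -/

import Mathlib

/-!
For `d ≥ 3` let `ζ = exp(2πi/d)`, so that `ψ_d` is the minimal polynomial of `β = ζ + ζ⁻¹`,
and let `k = deg ψ_d`. The polynomial `z ^ k ψ_d(z + z⁻¹)` is monic of degree `2k` and vanishes
at `ζ`, so `Φ_d` divides it; as `ζ` is not real, `ζ ∉ ℚ(β) ⊆ ℚ(ζ)`, whence `2k ≤ φ(d)` and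
`z ^ k ψ_d(z + z⁻¹) = Φ_d(z)`. Since `n` is odd, `d = 2` never divides it, and with
`z ψ_1(z + z⁻¹) = (z - 1)²` and `∏_{d ∣ n} Φ_d = z ^ n - 1` the left side evaluated at
`t = (z + z⁻¹)/2` is `(z ^ n - 1)(z - 1) / z ^ (m+1)`. The right side takes the same value because
`2 T_k((z + z⁻¹)/2) = z ^ k + z ^ (-k)`. Both sides agree on `[-1, 1]`, hence are equal.
-/

open scoped Real
open Polynomial

noncomputable section

/-- `ψ_d`: the minimal polynomial over ℚ of `2 cos(2π/d)`, regarded as a polynomial in `ℝ[t]`. -/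
def psiR (d : ℕ) : ℝ[X] :=
  (minpoly ℚ (2 * Real.cos (2 * π / d))).map (algebraMap ℚ ℝ)

namespace Polynomial

variable {R : Type*} [CommRing R]

/-- `X ^ natDegree p * p(X + X⁻¹)`, with the denominators cleared. -/
def joukowskiLift (p : R[X]) : R[X] :=
  ∑ i ∈ Finset.range (p.natDegree + 1), C (p.coeff i) * X ^ (p.natDegree - i) * (X ^ 2 + 1) ^ i

theorem aeval_joukowskiLift {K : Type*} [Field K] [Algebra R K] (p : R[X]) {z : K} (hz : z ≠ 0) :
    aeval z (joukowskiLift p) = z ^ p.natDegree * aeval (z + z⁻¹) p := by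
  rw [joukowskiLift, map_sum, aeval_eq_sum_range, Finset.mul_sum]
  refine Finset.sum_congr rfl fun i hi => ?_
  have hi : i ≤ p.natDegree := Nat.lt_succ_iff.mp (Finset.mem_range.mp hi)
  obtain ⟨j, hj⟩ := Nat.exists_eq_add_of_le hi
  simp only [hj, Nat.add_sub_cancel_left, map_mul, map_pow, map_add, aeval_X, aeval_C, map_one,
    Algebra.smul_def]
  have hX : z * (z + z⁻¹) = z ^ 2 + 1 := by field_simp
  rw [← hX, mul_pow, pow_add]
  ring

theorem natDegree_joukowskiLift_term_lt (p : R[X]) {i : ℕ} (hi : i < p.natDegree) :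
    (C (p.coeff i) * X ^ (p.natDegree - i) * ((X : R[X]) ^ 2 + 1) ^ i).natDegree
      < 2 * p.natDegree := by
  have hdeg : (((X : R[X]) ^ 2 + 1) ^ i).natDegree ≤ i * 2 :=
    natDegree_pow_le_of_le i (by compute_degree)
  calc _ ≤ 0 + (p.natDegree - i) + i * 2 :=
        natDegree_mul_le_of_le
          (natDegree_mul_le_of_le (natDegree_C _).le (natDegree_X_pow_le _)) hdeg
    _ < 2 * p.natDegree := by omega

theorem joukowskiLift_eq_add (p : R[X]) (hp : p.Monic) :
    joukowskiLift p = ∑ i ∈ Finset.range p.natDegree,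
      C (p.coeff i) * X ^ (p.natDegree - i) * (X ^ 2 + 1) ^ i + (X ^ 2 + 1) ^ p.natDegree := by
  rw [joukowskiLift, Finset.sum_range_succ, hp.coeff_natDegree]
  simp

theorem Monic.joukowskiLift [Nontrivial R] {p : R[X]} (hp : p.Monic) :
    p.joukowskiLift.Monic ∧ p.joukowskiLift.natDegree = 2 * p.natDegree := by
  have hX : ((X : R[X]) ^ 2 + 1).Monic := by simpa using monic_X_pow_add_C (1 : R) two_ne_zero
  have hlead : (((X : R[X]) ^ 2 + 1) ^ p.natDegree).Monic := hX.pow _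
  have hlead_deg : (((X : R[X]) ^ 2 + 1) ^ p.natDegree).natDegree = 2 * p.natDegree := by
    rw [hX.natDegree_pow, mul_comm, ← C_1, natDegree_X_pow_add_C]
  have hlower : (∑ i ∈ Finset.range p.natDegree,
      C (p.coeff i) * X ^ (p.natDegree - i) * ((X : R[X]) ^ 2 + 1) ^ i).degree
        < (((X : R[X]) ^ 2 + 1) ^ p.natDegree).degree := by
    rw [degree_eq_natDegree hlead.ne_zero, hlead_deg]
    refine (degree_sum_le _ _).trans_lt
      ((Finset.sup_lt_iff (WithBot.bot_lt_coe _)).2 fun i hi => ?_)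
    exact degree_le_natDegree.trans_lt
      (WithBot.coe_lt_coe.2 (natDegree_joukowskiLift_term_lt p (Finset.mem_range.1 hi)))
  rw [joukowskiLift_eq_add p hp]
  exact ⟨hlead.add_of_right hlower, (natDegree_add_eq_right_of_degree_lt hlower).trans hlead_deg⟩

end Polynomial

open IntermediateField in
theorem two_mul_natDegree_minpoly_le_of_notMem_adjoin {K L : Type*} [Field K] [Field L]
    [Algebra K L] {x y : L} (hy : IsIntegral K y) (hxy : x ∈ K⟮y⟯) (hyx : y ∉ K⟮x⟯) :
    2 * (minpoly K x).natDegree ≤ (minpoly K y).natDegree := by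
  have : FiniteDimensional K K⟮y⟯ := adjoin.finiteDimensional hy
  have hx : IsIntegral K x := (isIntegral_iff (x := ⟨x, hxy⟩)).1 (.of_finite K _)
  have hle : K⟮x⟯ ≤ K⟮y⟯ := adjoin_simple_le_iff.2 hxy
  have hne : Module.finrank K K⟮x⟯ ≠ Module.finrank K K⟮y⟯ := fun h =>
    hyx (eq_of_le_of_finrank_eq hle h ▸ mem_adjoin_simple_self K y)
  obtain ⟨c, hc⟩ := finrank_dvd_of_le_right hle
  rw [← adjoin.finrank hx, ← adjoin.finrank hy, hc]
  have hc0 : c ≠ 0 := by rintro rfl; simp_all [Module.finrank_pos.ne']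
  have hc1 : c ≠ 1 := by rintro rfl; simp_all
  nlinarith [Nat.two_le_iff c |>.2 ⟨hc0, hc1⟩]

theorem Complex.ofReal_two_cos (θ : ℝ) :
    ((2 * Real.cos θ : ℝ) : ℂ) = exp (θ * I) + (exp (θ * I))⁻¹ := by
  rw [← exp_neg, ← neg_mul, ← two_cos, ← ofReal_cos]
  push_cast
  rfl

open IntermediateField in
theorem Complex.notMem_adjoin_ofReal {w : ℂ} (hw : w.im ≠ 0) (b : ℝ) : w ∉ ℚ⟮(b : ℂ)⟯ := by
  have h := IntermediateField.adjoin_map ℚ {b} (ofRealAm.restrictScalars ℚ)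
  rw [Set.image_singleton] at h
  rw [show (b : ℂ) = ofRealAm.restrictScalars ℚ b from rfl, ← h]
  rintro ⟨r, -, rfl⟩
  exact hw (ofReal_im r)

theorem Complex.isPrimitiveRoot_exp_ofReal {d : ℕ} (hd : d ≠ 0) :
    IsPrimitiveRoot (exp (((2 * π / d : ℝ) : ℂ) * I)) d := by
  convert isPrimitiveRoot_exp d hd using 2
  push_cast
  ring

theorem isIntegral_two_cos_two_pi_div {d : ℕ} (hd : d ≠ 0) :
    IsIntegral ℚ (2 * Real.cos (2 * π / d)) := by
  have hζ := Complex.isPrimitiveRoot_exp_ofReal hd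
  rw [← isIntegral_algebraMap_iff (algebraMap ℝ ℂ).injective]
  change IsIntegral ℚ ((2 * Real.cos (2 * π / d) : ℝ) : ℂ)
  rw [Complex.ofReal_two_cos]
  exact (hζ.isIntegral (by omega)).tower_top.add (hζ.inv.isIntegral (by omega)).tower_top

open IntermediateField in
theorem two_mul_natDegree_minpoly_two_cos_le {d : ℕ} (hd : 3 ≤ d) :
    2 * (minpoly ℚ (2 * Real.cos (2 * π / d))).natDegree ≤ d.totient := by
  set ζ := Complex.exp (((2 * π / d : ℝ) : ℂ) * Complex.I)
  have hζ : IsPrimitiveRoot ζ d := Complex.isPrimitiveRoot_exp_ofReal (by omega)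
  have hζ_im : ζ.im ≠ 0 := by
    rw [Complex.exp_ofReal_mul_I_im]
    refine (Real.sin_pos_of_pos_of_lt_pi (by positivity) ?_).ne'
    rw [div_lt_iff₀ (by positivity)]
    have hd' : (3 : ℝ) ≤ d := by exact_mod_cast hd
    nlinarith [Real.pi_pos]
  have hβ : ((2 * Real.cos (2 * π / d) : ℝ) : ℂ) ∈ ℚ⟮ζ⟯ := by
    rw [Complex.ofReal_two_cos]
    exact add_mem (mem_adjoin_simple_self ℚ ζ) (inv_mem (mem_adjoin_simple_self ℚ ζ))
  rw [← minpoly.algebraMap_eq (algebraMap ℝ ℂ).injective, ← natDegree_cyclotomic d ℚ,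
    cyclotomic_eq_minpoly_rat hζ (by omega)]
  exact two_mul_natDegree_minpoly_le_of_notMem_adjoin (hζ.isIntegral (by omega)).tower_top hβ
    (Complex.notMem_adjoin_ofReal hζ_im _)

theorem joukowskiLift_minpoly_two_cos {d : ℕ} (hd : 3 ≤ d) :
    (minpoly ℚ (2 * Real.cos (2 * π / d))).joukowskiLift = cyclotomic d ℚ := by
  set ζ := Complex.exp (((2 * π / d : ℝ) : ℂ) * Complex.I)
  have hζ : IsPrimitiveRoot ζ d := Complex.isPrimitiveRoot_exp_ofReal (by omega)
  obtain ⟨hmonic, hdeg⟩ :=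
    (minpoly.monic (isIntegral_two_cos_two_pi_div (by omega : d ≠ 0))).joukowskiLift
  refine eq_of_monic_of_dvd_of_natDegree_le (cyclotomic.monic d ℚ) hmonic ?_ ?_
  · rw [cyclotomic_eq_minpoly_rat hζ (by omega)]
    refine minpoly.dvd ℚ ζ ?_
    rw [aeval_joukowskiLift _ (hζ.ne_zero (by omega)), ← Complex.ofReal_two_cos,
      ← Complex.coe_algebraMap, aeval_algebraMap_apply, minpoly.aeval, map_zero, mul_zero]
  · rw [hdeg, natDegree_cyclotomic]
    exact two_mul_natDegree_minpoly_two_cos_le hd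

theorem psiR_one : psiR 1 = X - 2 := by
  rw [psiR, show 2 * Real.cos (2 * π / (1 : ℕ)) = algebraMap ℚ ℝ 2 by simp, minpoly.eq_X_sub_C]
  simpa using map_ofNat C 2

theorem two_mul_natDegree_psiR {d : ℕ} (hd : 3 ≤ d) : 2 * (psiR d).natDegree = d.totient := by
  rw [psiR, natDegree_map, ← natDegree_cyclotomic d ℚ, ← joukowskiLift_minpoly_two_cos hd,
    ((minpoly.monic (isIntegral_two_cos_two_pi_div (by omega))).joukowskiLift).2]

theorem aeval_add_inv_psiR_mul_pow {d : ℕ} (hd : 3 ≤ d) {z : ℂ} (hz : z ≠ 0) :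
    aeval (z + z⁻¹) (psiR d) * z ^ (psiR d).natDegree = (cyclotomic d ℂ).eval z := by
  rw [psiR, aeval_map_algebraMap, natDegree_map, mul_comm, ← aeval_joukowskiLift _ hz,
    joukowskiLift_minpoly_two_cos hd, ← map_cyclotomic d (algebraMap ℚ ℂ), eval_map_algebraMap]

theorem prod_aeval_add_inv_psiR_mul_pow (m : ℕ) {z : ℂ} (hz : z ≠ 0) :
    (∏ d ∈ (2 * m + 1).divisors, aeval (z + z⁻¹) (psiR d)) * z ^ (m + 1)
      = (z ^ (2 * m + 1) - 1) * (z - 1) := by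
  set n := 2 * m + 1
  have hone : 1 ∈ n.divisors := Nat.one_mem_divisors.2 (by omega)
  have hbig : ∀ d ∈ n.divisors.erase 1, 3 ≤ d := by
    intro d hd
    obtain ⟨hd1, hdn⟩ := Finset.mem_erase.1 hd
    have hodd : Odd d := (odd_two_mul_add_one m).of_dvd_nat (Nat.dvd_of_mem_divisors hdn)
    rcases hodd with ⟨k, rfl⟩
    omega
  have hdeg : ∑ d ∈ n.divisors.erase 1, (psiR d).natDegree = m := by
    have h := Nat.sum_totient n
    rw [← Finset.add_sum_erase _ _ hone, Nat.totient_one,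
      ← Finset.sum_congr rfl fun d hd => two_mul_natDegree_psiR (hbig d hd), ← Finset.mul_sum] at h
    omega
  have hcyc : (∏ d ∈ n.divisors.erase 1, (cyclotomic d ℂ).eval z) * (z - 1) = z ^ n - 1 := by
    have h := prod_cyclotomic_eq_X_pow_sub_one (n := n) (by omega) ℂ
    rw [← Finset.prod_erase_mul _ _ hone, cyclotomic_one] at h
    simpa [eval_prod] using congrArg (eval z) h
  have hpsi_one : aeval (z + z⁻¹) (psiR 1) * z = (z - 1) ^ 2 := by
    rw [psiR_one]
    simp only [map_sub, aeval_X, map_ofNat]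
    field_simp
    ring
  calc (∏ d ∈ n.divisors, aeval (z + z⁻¹) (psiR d)) * z ^ (m + 1)
      = aeval (z + z⁻¹) (psiR 1) * z *
          ∏ d ∈ n.divisors.erase 1, aeval (z + z⁻¹) (psiR d) * z ^ (psiR d).natDegree := by
        rw [← Finset.mul_prod_erase _ _ hone, Finset.prod_mul_distrib, Finset.prod_pow_eq_pow_sum,
          hdeg]
        ring
    _ = (z - 1) ^ 2 * ∏ d ∈ n.divisors.erase 1, (cyclotomic d ℂ).eval z := by
        rw [hpsi_one, Finset.prod_congr rfl fun d hd => aeval_add_inv_psiR_mul_pow (hbig d hd) hz]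
    _ = (z ^ n - 1) * (z - 1) := by
        rw [← hcyc]
        ring

theorem Complex.ofReal_two_mul_eval_T_cos (k : ℕ) (θ : ℝ) :
    ((2 * (Chebyshev.T ℝ k).eval (Real.cos θ) : ℝ) : ℂ) =
      exp (θ * I) ^ k + (exp (θ * I) ^ k)⁻¹ := by
  rw [Chebyshev.T_real_cos, ← exp_nat_mul, ← mul_assoc, Int.cast_natCast,
    ← ofReal_natCast, ← ofReal_mul, ofReal_two_cos]

/-- Watkins–Zeitlin, odd case: for `n = 2m+1`,
`∏_{d ∣ n} ψ_d(2t) = 2 (T_{m+1}(t) − T_m(t))`. -/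
theorem prod_psi_two_X_odd (m n : ℕ) (hn : n = 2 * m + 1) :
    ∏ d ∈ n.divisors, (psiR d).comp (2 * X) =
      2 * (Polynomial.Chebyshev.T ℝ (m + 1) - Polynomial.Chebyshev.T ℝ m) := by
  subst hn
  refine eq_of_infinite_eval_eq _ _ ((Set.Icc_infinite (by norm_num : (-1 : ℝ) < 1)).mono ?_)
  intro x hx
  obtain ⟨θ, rfl⟩ : x ∈ Set.range Real.cos := by rwa [Real.range_cos]
  set z := Complex.exp (θ * Complex.I)
  have hz : z ≠ 0 := Complex.exp_ne_zero _
  have hL : ((eval (Real.cos θ) (∏ d ∈ (2 * m + 1).divisors, (psiR d).comp (2 * X)) : ℝ) : ℂ) =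
      ∏ d ∈ (2 * m + 1).divisors, aeval (z + z⁻¹) (psiR d) := by
    rw [eval_prod, Complex.ofReal_prod]
    refine Finset.prod_congr rfl fun d _ => ?_
    rw [eval_comp, eval_mul, eval_X, eval_ofNat, ← Complex.coe_algebraMap,
      ← aeval_algebraMap_apply_eq_algebraMap_eval, Complex.coe_algebraMap, Complex.ofReal_two_cos]
  have hR : ((eval (Real.cos θ)
      (2 * (Chebyshev.T ℝ (m + 1) - Chebyshev.T ℝ m)) : ℝ) : ℂ) =
      (z ^ (m + 1) + (z ^ (m + 1))⁻¹) - (z ^ m + (z ^ m)⁻¹) := by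
    rw [eval_mul, eval_sub, eval_ofNat, mul_sub, Complex.ofReal_sub, ← Nat.cast_succ,
      Complex.ofReal_two_mul_eval_T_cos, Complex.ofReal_two_mul_eval_T_cos]
  refine Complex.ofReal_injective (mul_right_cancel₀ (pow_ne_zero (m + 1) hz) ?_)
  rw [hL, hR, prod_aeval_add_inv_psiR_mul_pow m hz]
  field_simp
  ring

end
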